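/- Let f : ℝ² → ℝ be n times continuously differentiable on a fixed square box B₀, with all partial derivatives of total order ≤ n bounded on B₀. Then the Taylor form of order m₀ has order m₀ convergence: there is a constant C depending only on f and B₀ such that for every square B ⊆ B₀, the Hausdorff distance between f(B) and the Taylor form □f(B) is at most C·w(B)^{m₀}, where w(B) is the width of B. -/

import Mathlib

/-!
Along the segment from the centre `m` of the square to a point `q = m + v`, the `k`-th derivative
of `t ↦ f (m + t v)` is `(v₁∂ₓ + v₂∂ᵧ)ᵏ f`, which by the symmetry of mixed partials expands
binomially in the partials `∂ₓ^{k-j} ∂ᵧ^j f`. Taylor's theorem on `[0, 1]` with remainder of order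
`m₀` therefore gives `|f - T| ≤ K r^{m₀}` on the square, `K` depending only on the bounds of the
partials of order `m₀` on `B₀`; so the endpoints of `f(B)` and of the range of `T` over `B` differ
by at most `K r^{m₀}`. The remainder interval adds at most `r^{m₀} S` more, and `S` is bounded
uniformly since `r ≤ w(B₀)/2`.
-/

open Set

/-- Partial derivative with respect to the first variable. -/
noncomputable def pdx (f : ℝ × ℝ → ℝ) : ℝ × ℝ → ℝ :=
  fun p => deriv (fun x => f (x, p.2)) p.1

/-- Partial derivative with respect to the second variable. -/
noncomputable def pdy (f : ℝ × ℝ → ℝ) : ℝ × ℝ → ℝ :=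
  fun p => deriv (fun y => f (p.1, y)) p.2

/-- The mixed partial derivative `∂^{i+j} f / ∂x^i ∂y^j`. -/
noncomputable def partialDeriv2 (f : ℝ × ℝ → ℝ) (i j : ℕ) : ℝ × ℝ → ℝ :=
  pdx^[i] (pdy^[j] f)

open Metric Finset

section PartialDerivatives

variable {U : Set (ℝ × ℝ)} {g g₁ g₂ : ℝ × ℝ → ℝ} {p : ℝ × ℝ}

lemma pdx_eq_fderiv (hg : DifferentiableAt ℝ g p) : pdx g p = fderiv ℝ g p (1, 0) :=
  (hg.hasFDerivAt.comp_hasDerivAt p.1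
    ((hasDerivAt_id p.1).prodMk (hasDerivAt_const p.1 p.2))).deriv

lemma pdy_eq_fderiv (hg : DifferentiableAt ℝ g p) : pdy g p = fderiv ℝ g p (0, 1) :=
  (hg.hasFDerivAt.comp_hasDerivAt p.2
    ((hasDerivAt_const p.2 p.1).prodMk (hasDerivAt_id p.2))).deriv

lemma fderiv_apply_eq_pdx_pdy (hg : DifferentiableAt ℝ g p) (v : ℝ × ℝ) :
    fderiv ℝ g p v = v.1 * pdx g p + v.2 * pdy g p := by
  rw [pdx_eq_fderiv hg, pdy_eq_fderiv hg, ← smul_eq_mul, ← smul_eq_mul, ← map_smul, ← map_smul,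
    ← map_add]
  congr 1
  ext <;> simp

lemma hasDerivAt_comp_add_smul {v : ℝ × ℝ} {t : ℝ} (hg : DifferentiableAt ℝ g (p + t • v)) :
    HasDerivAt (fun s => g (p + s • v)) (v.1 * pdx g (p + t • v) + v.2 * pdy g (p + t • v)) t := by
  rw [← fderiv_apply_eq_pdx_pdy hg]
  exact hg.hasFDerivAt.comp_hasDerivAt t
    (by simpa using ((hasDerivAt_id t).smul_const v).const_add p)

lemma contDiffOn_pdx (hU : IsOpen U) {m : ℕ} (hg : ContDiffOn ℝ (m + 1 : ℕ) g U) :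
    ContDiffOn ℝ m (pdx g) U :=
  ((hg.fderiv_of_isOpen hU (by simp)).clm_apply contDiffOn_const).congr fun _ hq =>
    pdx_eq_fderiv ((hg.differentiableOn (by simp)).differentiableAt (hU.mem_nhds hq))

lemma contDiffOn_pdy (hU : IsOpen U) {m : ℕ} (hg : ContDiffOn ℝ (m + 1 : ℕ) g U) :
    ContDiffOn ℝ m (pdy g) U :=
  ((hg.fderiv_of_isOpen hU (by simp)).clm_apply contDiffOn_const).congr fun _ hq =>
    pdy_eq_fderiv ((hg.differentiableOn (by simp)).differentiableAt (hU.mem_nhds hq))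

lemma eqOn_pdx (hU : IsOpen U) (h : EqOn g₁ g₂ U) : EqOn (pdx g₁) (pdx g₂) U := fun q hq =>
  ((h.eventuallyEq_of_mem (hU.mem_nhds hq)).comp_tendsto
    ((continuous_id.prodMk continuous_const).tendsto q.1)).deriv_eq

lemma eqOn_pdy (hU : IsOpen U) (h : EqOn g₁ g₂ U) : EqOn (pdy g₁) (pdy g₂) U := fun q hq =>
  ((h.eventuallyEq_of_mem (hU.mem_nhds hq)).comp_tendsto
    ((continuous_const.prodMk continuous_id).tendsto q.2)).deriv_eq

lemma eqOn_iterate_pdx (hU : IsOpen U) (i : ℕ) (h : EqOn g₁ g₂ U) :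
    EqOn (pdx^[i] g₁) (pdx^[i] g₂) U := by
  induction i generalizing g₁ g₂ with
  | zero => exact h
  | succ i ih => exact ih (eqOn_pdx hU h)

lemma contDiffOn_iterate_pdx (hU : IsOpen U) {m : ℕ} (i : ℕ) (hg : ContDiffOn ℝ (m + i : ℕ) g U) :
    ContDiffOn ℝ m (pdx^[i] g) U := by
  induction i generalizing g with
  | zero => exact hg
  | succ i ih => exact ih (contDiffOn_pdx hU hg)

lemma contDiffOn_iterate_pdy (hU : IsOpen U) {m : ℕ} (j : ℕ) (hg : ContDiffOn ℝ (m + j : ℕ) g U) :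
    ContDiffOn ℝ m (pdy^[j] g) U := by
  induction j generalizing g with
  | zero => exact hg
  | succ j ih => exact ih (contDiffOn_pdy hU hg)

lemma pdy_pdx_eqOn (hU : IsOpen U) (hg : ContDiffOn ℝ 2 g U) :
    EqOn (pdy (pdx g)) (pdx (pdy g)) U := by
  intro p hp
  have hd : ∀ q ∈ U, DifferentiableAt ℝ g q := fun q hq =>
    (hg.differentiableOn (by simp)).differentiableAt (hU.mem_nhds hq)
  have hd2 : DifferentiableAt ℝ (fderiv ℝ g) p :=
    ((hg.fderiv_of_isOpen hU (m := 1) (by norm_num)).differentiableOn one_ne_zero).differentiableAt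
      (hU.mem_nhds hp)
  have hφ (v : ℝ × ℝ) :
      HasFDerivAt (fun q => fderiv ℝ g q v) ((fderiv ℝ (fderiv ℝ g) p).flip v) p := by
    simpa using hd2.hasFDerivAt.clm_apply (hasFDerivAt_const v p)
  have hsymm := (hg.contDiffAt (hU.mem_nhds hp)).isSymmSndFDerivAt (by simp)
  calc pdy (pdx g) p = pdy (fun q => fderiv ℝ g q (1, 0)) p :=
        eqOn_pdy hU (fun q hq => pdx_eq_fderiv (hd q hq)) hp
    _ = fderiv ℝ (fderiv ℝ g) p (0, 1) (1, 0) := by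
        rw [pdy_eq_fderiv (hφ _).differentiableAt, (hφ _).fderiv]; rfl
    _ = fderiv ℝ (fderiv ℝ g) p (1, 0) (0, 1) := hsymm _ _
    _ = pdx (fun q => fderiv ℝ g q (0, 1)) p := by
        rw [pdx_eq_fderiv (hφ _).differentiableAt, (hφ _).fderiv]; rfl
    _ = pdx (pdy g) p := (eqOn_pdx hU (fun q hq => pdy_eq_fderiv (hd q hq)) hp).symm

lemma pdy_iterate_pdx_eqOn (hU : IsOpen U) (i : ℕ) (hg : ContDiffOn ℝ (i + 1 : ℕ) g U) :
    EqOn (pdy (pdx^[i] g)) (pdx^[i] (pdy g)) U := by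
  induction i generalizing g with
  | zero => exact fun _ _ => rfl
  | succ i ih =>
    intro q hq
    rw [Function.iterate_succ_apply, Function.iterate_succ_apply, ih (contDiffOn_pdx hU hg) hq]
    exact eqOn_iterate_pdx hU i
      (pdy_pdx_eqOn hU (hg.of_le (by exact_mod_cast (by omega : 2 ≤ i + 1 + 1)))) hq

end PartialDerivatives

section IteratedDirDeriv

variable {U : Set (ℝ × ℝ)} {f : ℝ × ℝ → ℝ}

lemma contDiffOn_partialDeriv2 (hU : IsOpen U) {m i j : ℕ}
    (hf : ContDiffOn ℝ (m + i + j : ℕ) f U) : ContDiffOn ℝ m (partialDeriv2 f i j) U :=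
  contDiffOn_iterate_pdx hU i (contDiffOn_iterate_pdy hU j hf)

lemma pdx_partialDeriv2 (i j : ℕ) : pdx (partialDeriv2 f i j) = partialDeriv2 f (i + 1) j :=
  (Function.iterate_succ_apply' pdx i _).symm

lemma pdy_partialDeriv2_eqOn (hU : IsOpen U) {i j : ℕ} (hf : ContDiffOn ℝ (i + j + 1 : ℕ) f U) :
    EqOn (pdy (partialDeriv2 f i j)) (partialDeriv2 f i (j + 1)) U := by
  intro q hq
  rw [partialDeriv2, partialDeriv2, Function.iterate_succ_apply']
  have hf' : ContDiffOn ℝ (i + 1 + j : ℕ) f U := hf.of_le (by exact_mod_cast (by omega))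
  exact pdy_iterate_pdx_eqOn hU i (contDiffOn_iterate_pdy hU j hf') hq

/-- `(v₁ ∂ₓ + v₂ ∂ᵧ)ᵏ f` at `p`, expanded by the binomial theorem. -/
noncomputable def iteratedDirDeriv (f : ℝ × ℝ → ℝ) (k : ℕ) (v p : ℝ × ℝ) : ℝ :=
  ∑ j ∈ range (k + 1), (k.choose j : ℝ) * v.1 ^ (k - j) * v.2 ^ j * partialDeriv2 f (k - j) j p

@[simp]
lemma iteratedDirDeriv_zero (v p : ℝ × ℝ) : iteratedDirDeriv f 0 v p = f p := by
  simp [iteratedDirDeriv, partialDeriv2]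

lemma hasDerivAt_iteratedDirDeriv_comp_add_smul (hU : IsOpen U) {k : ℕ}
    (hf : ContDiffOn ℝ (k + 1 : ℕ) f U) {p v : ℝ × ℝ} {t : ℝ} (ht : p + t • v ∈ U) :
    HasDerivAt (fun s => iteratedDirDeriv f k v (p + s • v))
      (iteratedDirDeriv f (k + 1) v (p + t • v)) t := by
  set x := p + t • v
  have hterm : ∀ j ∈ range (k + 1), HasDerivAt
      (fun s => (k.choose j : ℝ) * v.1 ^ (k - j) * v.2 ^ j * partialDeriv2 f (k - j) j (p + s • v))
      ((k.choose j : ℝ) * v.1 ^ (k - j) * v.2 ^ j *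
        (v.1 * partialDeriv2 f (k - j + 1) j x + v.2 * partialDeriv2 f (k - j) (j + 1) x)) t := by
    intro j hj
    have hjk : k - j + j = k := Nat.sub_add_cancel (Nat.lt_succ_iff.1 (mem_range.1 hj))
    have hC1 : ContDiffOn ℝ 1 (partialDeriv2 f (k - j) j) U :=
      contDiffOn_partialDeriv2 hU (m := 1) (hf.of_le (by exact_mod_cast (by omega)))
    have hd : DifferentiableAt ℝ (partialDeriv2 f (k - j) j) x :=
      (hC1.differentiableOn one_ne_zero).differentiableAt (hU.mem_nhds ht)
    have h := (hasDerivAt_comp_add_smul hd).const_mul ((k.choose j : ℝ) * v.1 ^ (k - j) * v.2 ^ j)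
    rwa [pdx_partialDeriv2, pdy_partialDeriv2_eqOn hU (hf.of_le (by exact_mod_cast (by omega))) ht]
      at h
  refine (HasDerivAt.fun_sum hterm).congr_deriv ?_
  simp only [iteratedDirDeriv, mul_assoc]
  rw [sum_choose_succ_mul (fun i l => v.1 ^ l * (v.2 ^ i * partialDeriv2 f l i x)),
    ← sum_add_distrib]
  refine sum_congr rfl fun j hj => ?_
  rw [show k + 1 - j = k - j + 1 by have := mem_range.1 hj; omega]
  ring

lemma abs_iteratedDirDeriv_le {k : ℕ} {v x : ℝ × ℝ} {r : ℝ} {M : ℕ → ℝ}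
    (hM : ∀ j ≤ k, |partialDeriv2 f (k - j) j x| ≤ M j) (hv : ‖v‖ ≤ r) :
    |iteratedDirDeriv f k v x| ≤ (∑ j ∈ range (k + 1), (k.choose j : ℝ) * M j) * r ^ k := by
  have hr : 0 ≤ r := (norm_nonneg v).trans hv
  have h₁ : |v.1| ≤ r := (norm_fst_le v).trans hv
  have h₂ : |v.2| ≤ r := (norm_snd_le v).trans hv
  rw [sum_mul]
  refine (abs_sum_le_sum_abs _ _).trans (sum_le_sum fun j hj => ?_)
  have hjk : j ≤ k := Nat.lt_succ_iff.1 (mem_range.1 hj)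
  calc |(k.choose j : ℝ) * v.1 ^ (k - j) * v.2 ^ j * partialDeriv2 f (k - j) j x|
      = k.choose j * |v.1| ^ (k - j) * |v.2| ^ j * |partialDeriv2 f (k - j) j x| := by
        simp [abs_mul, abs_pow]
    _ ≤ k.choose j * r ^ (k - j) * r ^ j * M j := by
        have := hM j hjk
        gcongr
    _ = k.choose j * M j * r ^ k := by
        rw [show r ^ k = r ^ (k - j) * r ^ j by rw [← pow_add, Nat.sub_add_cancel hjk]]
        ring

end IteratedDirDeriv

section Taylor

variable {g : ℕ → ℝ → ℝ} {N : ℕ}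

lemma hasDerivAt_sum_mul_one_sub_pow_div_factorial {t : ℝ}
    (hg : ∀ k ≤ N, HasDerivAt (g k) (g (k + 1) t) t) :
    HasDerivAt (fun s => ∑ k ∈ range (N + 1), g k s * (1 - s) ^ k / k.factorial)
      (g (N + 1) t * (1 - t) ^ N / N.factorial) t := by
  -- the derivative of the `k`-th term is `h (k + 1) - h k`, so the sum telescopes
  set h : ℕ → ℝ := fun k => k * g k t * (1 - t) ^ (k - 1) / k.factorial
  have hterm : ∀ k ∈ range (N + 1),
      HasDerivAt (fun s => g k s * (1 - s) ^ k / k.factorial) (h (k + 1) - h k) t := by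
    intro k hk
    have hpow : HasDerivAt (fun s : ℝ => (1 - s) ^ k) (k * (1 - t) ^ (k - 1) * -1) t := by
      simpa using ((hasDerivAt_id t).const_sub 1).fun_pow k
    refine (((hg k (Nat.lt_succ_iff.1 (mem_range.1 hk))).mul hpow).div_const
      (k.factorial : ℝ)).congr_deriv ?_
    simp only [h, Nat.factorial_succ, Nat.add_sub_cancel]
    push_cast
    field_simp
    ring
  refine (HasDerivAt.fun_sum hterm).congr_deriv ?_
  rw [sum_range_sub h]
  simp only [h, Nat.factorial_succ, Nat.add_sub_cancel]
  push_cast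
  field_simp
  simp

lemma abs_sub_sum_div_factorial_le {K : ℝ}
    (hg : ∀ k < N, ∀ t ∈ Icc (0 : ℝ) 1, HasDerivAt (g k) (g (k + 1) t) t)
    (hK : ∀ t ∈ Icc (0 : ℝ) 1, |g N t| ≤ K) :
    |g 0 1 - ∑ k ∈ range N, g k 0 / k.factorial| ≤ K := by
  rcases N with _ | N
  · simpa using hK 1 (right_mem_Icc.2 zero_le_one)
  have hderiv : ∀ t ∈ Ico (0 : ℝ) 1, ‖g (N + 1) t * (1 - t) ^ N / N.factorial‖ ≤ K := by
    intro t ht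
    have hK' := hK t (Ico_subset_Icc_self ht)
    have hcoef : |(1 - t) ^ N / N.factorial| ≤ 1 := by
      rw [abs_of_nonneg (by have := ht.2; positivity)]
      exact div_le_one_of_le₀ ((pow_le_one₀ (by linarith [ht.2]) (by linarith [ht.1])).trans
        (Nat.one_le_cast.2 (Nat.factorial_pos N))) (by positivity)
    rw [Real.norm_eq_abs, mul_div_assoc, abs_mul]
    simpa using mul_le_mul hK' hcoef (abs_nonneg _) ((abs_nonneg _).trans hK')
  have := norm_image_sub_le_of_norm_deriv_le_segment'
    (fun t ht => (hasDerivAt_sum_mul_one_sub_pow_div_factorial fun k hk =>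
      hg k (Nat.lt_succ_of_le hk) t ht).hasDerivWithinAt) hderiv 1 (right_mem_Icc.2 zero_le_one)
  simpa [sum_range_succ'] using this

end Taylor

section TaylorOnBalls

variable {U B₀ : Set (ℝ × ℝ)} {f : ℝ × ℝ → ℝ} {N : ℕ}

lemma abs_sub_sum_iteratedDirDeriv_le (hU : IsOpen U) (hf : ContDiffOn ℝ N f U) {p q : ℝ × ℝ}
    {r : ℝ} (hball : closedBall p r ⊆ U) (hq : q ∈ closedBall p r) {M : ℕ → ℝ}
    (hM : ∀ j ≤ N, ∀ x ∈ closedBall p r, |partialDeriv2 f (N - j) j x| ≤ M j) :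
    |f q - ∑ k ∈ range N, iteratedDirDeriv f k (q - p) p / k.factorial| ≤
      (∑ j ∈ range (N + 1), (N.choose j : ℝ) * M j) * r ^ N := by
  have hseg : ∀ t ∈ Icc (0 : ℝ) 1, p + t • (q - p) ∈ closedBall p r := fun t ht =>
    (convex_closedBall p r).add_smul_sub_mem (mem_closedBall_self (dist_nonneg.trans hq)) hq ht
  have h := abs_sub_sum_div_factorial_le
    (g := fun k t => iteratedDirDeriv f k (q - p) (p + t • (q - p)))
    (fun k hk t ht => hasDerivAt_iteratedDirDeriv_comp_add_smul hU
      (hf.of_le (by exact_mod_cast hk)) (hball (hseg t ht)))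
    (fun t ht => abs_iteratedDirDeriv_le (fun j hj => hM j hj _ (hseg t ht))
      (mem_closedBall_iff_norm.1 hq))
  simpa using h

lemma exists_abs_sub_sum_iteratedDirDeriv_le (hU : IsOpen U) (hf : ContDiffOn ℝ N f U)
    (hB₀U : B₀ ⊆ U)
    (hbdd : ∀ j ≤ N, BddAbove ((fun q => |partialDeriv2 f (N - j) j q|) '' B₀)) :
    ∃ K, ∀ p r, closedBall p r ⊆ B₀ → ∀ q ∈ closedBall p r,
      |f q - ∑ k ∈ range N, iteratedDirDeriv f k (q - p) p / k.factorial| ≤ K * r ^ N :=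
  ⟨_, fun _ _ hball _ hq => abs_sub_sum_iteratedDirDeriv_le hU hf (hball.trans hB₀U) hq
    fun j hj _ hx => le_csSup (hbdd j hj) (mem_image_of_mem _ (hball hx))⟩

end TaylorOnBalls

section TaylorForm

variable {f : ℝ × ℝ → ℝ} {n m₀ : ℕ} {B₀ : Set (ℝ × ℝ)}

/-- The factor `∑_{k=m₀}^{n} s_k r^{k-m₀}` of the remainder interval of the Taylor form at the
centre `p`. -/
noncomputable def taylorFormRemainder (f : ℝ × ℝ → ℝ) (n m₀ : ℕ) (B₀ : Set (ℝ × ℝ))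
    (p : ℝ × ℝ) (r : ℝ) : ℝ :=
  (∑ k ∈ Ico m₀ n, ((1 / (k.factorial : ℝ)) * ∑ j ∈ range (k + 1), (k.choose j : ℝ) *
      |partialDeriv2 f (k - j) j p|) * r ^ (k - m₀)) +
    ((1 / (n.factorial : ℝ)) * ∑ j ∈ range (n + 1), (n.choose j : ℝ) *
      sSup ((fun q => |partialDeriv2 f (n - j) j q|) '' B₀)) * r ^ (n - m₀)

lemma sum_choose_mul_sSup_abs_nonneg (k : ℕ) :
    0 ≤ ∑ j ∈ range (k + 1), (k.choose j : ℝ) *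
      sSup ((fun q => |partialDeriv2 f (k - j) j q|) '' B₀) :=
  sum_nonneg fun _ _ => mul_nonneg (Nat.cast_nonneg _)
    (Real.sSup_nonneg (by rintro _ ⟨q, -, rfl⟩; exact abs_nonneg _))

lemma taylorFormRemainder_nonneg (p : ℝ × ℝ) {r : ℝ} (hr : 0 ≤ r) :
    0 ≤ taylorFormRemainder f n m₀ B₀ p r := by
  have := sum_choose_mul_sSup_abs_nonneg (f := f) (B₀ := B₀) n
  unfold taylorFormRemainder
  positivity

lemma exists_taylorFormRemainder_le
    (hbdd : ∀ i j : ℕ, i + j ≤ n → BddAbove ((fun q => |partialDeriv2 f i j q|) '' B₀)) (R : ℝ) :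
    ∃ L, ∀ p ∈ B₀, ∀ r ∈ Icc 0 R, taylorFormRemainder f n m₀ B₀ p r ≤ L := by
  refine ⟨(∑ k ∈ Ico m₀ n, ((1 / (k.factorial : ℝ)) * ∑ j ∈ range (k + 1), (k.choose j : ℝ) *
      sSup ((fun q => |partialDeriv2 f (k - j) j q|) '' B₀)) * R ^ (k - m₀)) +
    ((1 / (n.factorial : ℝ)) * ∑ j ∈ range (n + 1), (n.choose j : ℝ) *
      sSup ((fun q => |partialDeriv2 f (n - j) j q|) '' B₀)) * R ^ (n - m₀), ?_⟩
  rintro p hp r ⟨hr, hrR⟩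
  unfold taylorFormRemainder
  gcongr with k hk j hj
  · have := sum_choose_mul_sSup_abs_nonneg (f := f) (B₀ := B₀) k
    positivity
  · exact le_csSup (hbdd _ _ (by grind)) (mem_image_of_mem _ hp)
  · have := sum_choose_mul_sSup_abs_nonneg (f := f) (B₀ := B₀) n
    positivity

end TaylorForm

section HausdorffDistance

variable {α : Type*} {s : Set α} {f g : α → ℝ} {c : ℝ}

lemma csInf_image_le_csInf_image_add (hs : s.Nonempty) (hf : BddBelow (f '' s))
    (h : ∀ x ∈ s, f x ≤ g x + c) : sInf (f '' s) ≤ sInf (g '' s) + c := by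
  rw [← sub_le_iff_le_add]
  refine le_csInf (hs.image g) ?_
  rintro _ ⟨x, hx, rfl⟩
  exact sub_le_iff_le_add.2 ((csInf_le hf (mem_image_of_mem f hx)).trans (h x hx))

lemma csSup_image_le_csSup_image_add (hs : s.Nonempty) (hg : BddAbove (g '' s))
    (h : ∀ x ∈ s, f x ≤ g x + c) : sSup (f '' s) ≤ sSup (g '' s) + c := by
  refine csSup_le (hs.image f) ?_
  rintro _ ⟨x, hx, rfl⟩
  exact (h x hx).trans (add_le_add_left (le_csSup hg (mem_image_of_mem g hx)) c)

lemma abs_csInf_image_sub_csInf_image_le (hs : s.Nonempty) (hf : BddBelow (f '' s))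
    (hg : BddBelow (g '' s)) (h : ∀ x ∈ s, |f x - g x| ≤ c) :
    |sInf (f '' s) - sInf (g '' s)| ≤ c := by
  rw [abs_sub_le_iff, sub_le_iff_le_add', sub_le_iff_le_add']
  exact ⟨csInf_image_le_csInf_image_add hs hf fun x hx => by linarith [abs_le.1 (h x hx)],
    csInf_image_le_csInf_image_add hs hg fun x hx => by linarith [abs_le.1 (h x hx)]⟩

lemma abs_csSup_image_sub_csSup_image_le (hs : s.Nonempty) (hf : BddAbove (f '' s))
    (hg : BddAbove (g '' s)) (h : ∀ x ∈ s, |f x - g x| ≤ c) :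
    |sSup (f '' s) - sSup (g '' s)| ≤ c := by
  rw [abs_sub_le_iff, sub_le_iff_le_add', sub_le_iff_le_add']
  exact ⟨csSup_image_le_csSup_image_add hs hg fun x hx => by linarith [abs_le.1 (h x hx)],
    csSup_image_le_csSup_image_add hs hf fun x hx => by linarith [abs_le.1 (h x hx)]⟩

lemma max_abs_sInf_sSup_image_sub_le [TopologicalSpace α] {d : ℝ} (hs : IsCompact s)
    (hne : s.Nonempty) (hf : ContinuousOn f s) (hg : ContinuousOn g s)
    (h : ∀ x ∈ s, |f x - g x| ≤ c) (hd : 0 ≤ d) :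
    max |sInf (f '' s) - (sInf (g '' s) - d)| |sSup (f '' s) - (sSup (g '' s) + d)| ≤ c + d := by
  have hinf := abs_csInf_image_sub_csInf_image_le hne (hs.bddBelow_image hf)
    (hs.bddBelow_image hg) h
  have hsup := abs_csSup_image_sub_csSup_image_le hne (hs.bddAbove_image hf)
    (hs.bddAbove_image hg) h
  rw [abs_le] at hinf hsup
  exact max_le (abs_le.2 ⟨by linarith, by linarith⟩) (abs_le.2 ⟨by linarith, by linarith⟩)

end HausdorffDistance

lemma closedBall_pair_eq_Icc (x y r : ℝ) :
    closedBall (x, y) r = Icc (x - r, y - r) (x + r, y + r) := by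
  rw [← closedBall_prod_same, Real.closedBall_eq_Icc, Real.closedBall_eq_Icc, Icc_prod_Icc]

theorem taylor_form_order_m_convergence_general
    (f : ℝ × ℝ → ℝ) (n m₀ : ℕ) (hm₀n : m₀ ≤ n)
    (ax ay w0 : ℝ)
    (U : Set (ℝ × ℝ)) (hU : IsOpen U)
    (hB₀U : Icc (ax, ay) (ax + w0, ay + w0) ⊆ U)
    (hf : ContDiffOn ℝ n f U)
    (hbdd : ∀ i j : ℕ, i + j ≤ n →
      BddAbove ((fun q => |partialDeriv2 f i j q|) ''
        Icc (ax, ay) (ax + w0, ay + w0))) :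
    ∃ C > 0, ∀ mx my r : ℝ, 0 ≤ r →
      Icc (mx - r, my - r) (mx + r, my + r) ⊆ Icc (ax, ay) (ax + w0, ay + w0) →
      let B : Set (ℝ × ℝ) := Icc (mx - r, my - r) (mx + r, my + r)
      let T : ℝ × ℝ → ℝ := fun q =>
        ∑ k ∈ Finset.range m₀, (1 / (k.factorial : ℝ)) *
          ∑ j ∈ Finset.range (k + 1), (k.choose j : ℝ) *
            (q.1 - mx) ^ (k - j) * (q.2 - my) ^ j *
            partialDeriv2 f (k - j) j (mx, my)
      let S : ℝ :=
        (∑ k ∈ Finset.Ico m₀ n, ((1 / (k.factorial : ℝ)) *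
          ∑ j ∈ Finset.range (k + 1), (k.choose j : ℝ) *
            |partialDeriv2 f (k - j) j (mx, my)|) * r ^ (k - m₀)) +
        ((1 / (n.factorial : ℝ)) *
          ∑ j ∈ Finset.range (n + 1), (n.choose j : ℝ) *
            sSup ((fun q => |partialDeriv2 f (n - j) j q|) ''
              Icc (ax, ay) (ax + w0, ay + w0))) * r ^ (n - m₀)
      max |sInf (f '' B) - (sInf (T '' B) - r ^ m₀ * S)|
          |sSup (f '' B) - (sSup (T '' B) + r ^ m₀ * S)| ≤
        C * (2 * r) ^ m₀ := by
  obtain ⟨K, hK⟩ := exists_abs_sub_sum_iteratedDirDeriv_le hU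
    (hf.of_le (by exact_mod_cast hm₀n)) hB₀U fun j hj => hbdd _ _ (by omega)
  obtain ⟨L, hL⟩ := exists_taylorFormRemainder_le (m₀ := m₀) hbdd (w0 / 2)
  refine ⟨max (K + L) 1, lt_max_of_lt_right one_pos, ?_⟩
  intro mx my r hr hBB₀ B T S
  have hrw : r ≤ w0 / 2 := by
    obtain ⟨h₁, h₂⟩ := (Set.Icc_subset_Icc_iff (Prod.mk_le_mk.2 ⟨by linarith, by linarith⟩)).1 hBB₀
    linarith [h₁.1, h₂.1]
  rw [← closedBall_pair_eq_Icc] at hBB₀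
  have hTaylor : ∀ q ∈ closedBall (mx, my) r, |f q - T q| ≤ K * r ^ m₀ := fun q hq => by
    -- `T q` unfolds to `∑ k ∈ range m₀, 1 / k! * iteratedDirDeriv f k (q - (mx, my)) (mx, my)`
    convert hK _ _ hBB₀ q hq using 3
    exact sum_congr rfl fun k _ => one_div_mul_eq_div _ _
  have hS₀ : 0 ≤ S := taylorFormRemainder_nonneg _ hr
  have hSL : S ≤ L := hL _ (hBB₀ (mem_closedBall_self hr)) r ⟨hr, hrw⟩
  rw [show B = closedBall (mx, my) r from (closedBall_pair_eq_Icc mx my r).symm]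
  calc _ ≤ K * r ^ m₀ + r ^ m₀ * S :=
        max_abs_sInf_sSup_image_sub_le (isCompact_closedBall _ _) (nonempty_closedBall.2 hr)
          (hf.continuousOn.mono (hBB₀.trans hB₀U)) (by fun_prop) hTaylor (by positivity)
    _ ≤ (K + L) * r ^ m₀ := by rw [add_mul, mul_comm L]; gcongr
    _ ≤ max (K + L) 1 * r ^ m₀ := by gcongr; exact le_max_left _ _
    _ ≤ max (K + L) 1 * (2 * r) ^ m₀ := by gcongr; linarith

theorem taylor_form_order_m_convergence
    (f : ℝ × ℝ → ℝ) (n m₀ : ℕ) (hm₀ : 1 ≤ m₀) (hm₀n : m₀ ≤ n)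
    (ax ay w0 : ℝ) (hw0 : 0 < w0)
    (U : Set (ℝ × ℝ)) (hU : IsOpen U)
    (hB₀U : Icc (ax, ay) (ax + w0, ay + w0) ⊆ U)
    (hf : ContDiffOn ℝ n f U)
    (hbdd : ∀ i j : ℕ, i + j ≤ n →
      BddAbove ((fun q => |partialDeriv2 f i j q|) ''
        Icc (ax, ay) (ax + w0, ay + w0))) :
    ∃ C > 0, ∀ mx my r : ℝ, 0 ≤ r →
      Icc (mx - r, my - r) (mx + r, my + r) ⊆ Icc (ax, ay) (ax + w0, ay + w0) →
      let B : Set (ℝ × ℝ) := Icc (mx - r, my - r) (mx + r, my + r)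
      let T : ℝ × ℝ → ℝ := fun q =>
        ∑ k ∈ Finset.range m₀, (1 / (k.factorial : ℝ)) *
          ∑ j ∈ Finset.range (k + 1), (k.choose j : ℝ) *
            (q.1 - mx) ^ (k - j) * (q.2 - my) ^ j *
            partialDeriv2 f (k - j) j (mx, my)
      let S : ℝ :=
        (∑ k ∈ Finset.Ico m₀ n, ((1 / (k.factorial : ℝ)) *
          ∑ j ∈ Finset.range (k + 1), (k.choose j : ℝ) *
            |partialDeriv2 f (k - j) j (mx, my)|) * r ^ (k - m₀)) +
        ((1 / (n.factorial : ℝ)) *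
          ∑ j ∈ Finset.range (n + 1), (n.choose j : ℝ) *
            sSup ((fun q => |partialDeriv2 f (n - j) j q|) ''
              Icc (ax, ay) (ax + w0, ay + w0))) * r ^ (n - m₀)
      max |sInf (f '' B) - (sInf (T '' B) - r ^ m₀ * S)|
          |sSup (f '' B) - (sSup (T '' B) + r ^ m₀ * S)| ≤
        C * (2 * r) ^ m₀ :=
  taylor_form_order_m_convergence_general f n m₀ hm₀n ax ay w0 U hU hB₀U hf hbdd
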